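/- arXiv:2111.14222 — 2 statements merged into one kernel-verified Lean document; each statement's English description precedes it below -/
import Mathlib

section
/- Let H be a complex Hilbert space, let A be a Hilbert–Schmidt operator on H, and let 0 ≤ ν ≤ 1. Then w_{(2,ν)}(A)² = (2ν² - 2ν + 1) ‖A‖₂² + 2ν(1-ν) |tr(A²)|, where tr denotes the trace (A² is trace class since A is Hilbert–Schmidt). -/
/-!
Expanding `‖(αA + βA*) eᵢ‖²` and summing over the basis gives
`ν²‖A‖₂² + (1-ν)²‖A*‖₂² + 2ν(1-ν) Re(e^{2iθ} tr A²)`, the cross terms being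
`⟪A eᵢ, A* eᵢ⟫ = ⟪A² eᵢ, eᵢ⟫`. Since `‖A*‖₂ = ‖A‖₂` (swap the order of summation in the
nonnegative double series `∑ᵢ ∑ⱼ |⟪eⱼ, A eᵢ⟫|²`) and `ν(1-ν) ≥ 0`, the supremum over `θ` is
attained when `e^{2iθ} tr A² = |tr A²|`.
-/

variable {H : Type*} [NormedAddCommGroup H] [InnerProductSpace ℂ H] [CompleteSpace H]

/-- The operator `ν e^{iθ} A + (1-ν) e^{-iθ} A*`. -/
noncomputable def weightedPart {E : Type*} [NormedAddCommGroup E] [InnerProductSpace ℂ E]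
    [CompleteSpace E] (ν θ : ℝ) (A : E →L[ℂ] E) : E →L[ℂ] E :=
  ((ν : ℂ) * Complex.exp (θ * Complex.I)) • A +
    (((1 - ν : ℝ) : ℂ) * Complex.exp (-(θ * Complex.I))) • ContinuousLinearMap.adjoint A

/-- The Hilbert–Schmidt norm `‖A‖₂ = √(∑ᵢ ‖A eᵢ‖²)` computed w.r.t. a Hilbert basis `e`. -/
noncomputable def hsNorm {E : Type*} [NormedAddCommGroup E] [InnerProductSpace ℂ E]
    {ι : Type*} (e : HilbertBasis ι ℂ E) (A : E →L[ℂ] E) : ℝ :=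
  Real.sqrt (∑' i, ‖A (e i)‖ ^ 2)

/-- The trace `tr(T) = ∑ᵢ ⟨eᵢ, T eᵢ⟩` computed w.r.t. a Hilbert basis `e`. -/
noncomputable def trBasis {E : Type*} [NormedAddCommGroup E] [InnerProductSpace ℂ E]
    {ι : Type*} (e : HilbertBasis ι ℂ E) (T : E →L[ℂ] E) : ℂ :=
  ∑' i, (inner ℂ (e i) (T (e i)) : ℂ)

/-- The weighted Hilbert–Schmidt numerical radius
`w_{(2,ν)}(A) = sup_{θ ∈ ℝ} ‖ν e^{iθ} A + (1-ν) e^{-iθ} A*‖₂`. -/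
noncomputable def wHS {E : Type*} [NormedAddCommGroup E] [InnerProductSpace ℂ E]
    [CompleteSpace E] {ι : Type*} (e : HilbertBasis ι ℂ E) (ν : ℝ) (A : E →L[ℂ] E) : ℝ :=
  ⨆ θ : ℝ, hsNorm e (weightedPart ν θ A)

/-- The block operator `[[X, Y],[Z, W]]` on the Hilbert space direct sum `H ⊕₂ H`,
mapping `(x, y)` to `(Xx + Yy, Zx + Wy)`. -/
noncomputable def blockOp (X Y Z W : H →L[ℂ] H) :
    WithLp 2 (H × H) →L[ℂ] WithLp 2 (H × H) :=
  ((WithLp.prodContinuousLinearEquiv 2 ℂ H H).symm.toContinuousLinearMap).comp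
    ((((X.comp (ContinuousLinearMap.fst ℂ H H)) + (Y.comp (ContinuousLinearMap.snd ℂ H H))).prod
      ((Z.comp (ContinuousLinearMap.fst ℂ H H)) + (W.comp (ContinuousLinearMap.snd ℂ H H)))).comp
      (WithLp.prodContinuousLinearEquiv 2 ℂ H H).toContinuousLinearMap)

open scoped InnerProductSpace InnerProduct

theorem hasSum_tsum_comm_of_nonneg {α β : Type*} {f : α → β → ℝ} {g : α → ℝ} {s : ℝ}
    (hf : ∀ a b, 0 ≤ f a b) (hrow : ∀ a, HasSum (f a) (g a)) (hg : HasSum g s) :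
    HasSum (fun b => ∑' a, f a b) s := by
  have hF : Summable (Function.uncurry f) :=
    (summable_prod_of_nonneg fun p => hf p.1 p.2).2
      ⟨fun a => (hrow a).summable, hg.summable.congr fun a => ((hrow a).tsum_eq).symm⟩
  have hs : HasSum (Function.uncurry f) s := by
    convert hF.hasSum
    exact hg.unique (hF.hasSum.prod_fiberwise hrow)
  exact ((Equiv.prodComm β α).hasSum_iff.2 hs).prod_fiberwise
    fun b => (hF.prod_symm.prod_factor b).hasSum

section HilbertSchmidt

variable {𝕜 E F ι κ : Type*} [RCLike 𝕜]
  [NormedAddCommGroup E] [InnerProductSpace 𝕜 E] [NormedAddCommGroup F] [InnerProductSpace 𝕜 F]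

theorem HilbertBasis.hasSum_norm_inner_sq (b : HilbertBasis ι 𝕜 E) (x : E) :
    HasSum (fun i => ‖⟪b i, x⟫_𝕜‖ ^ 2) (‖x‖ ^ 2) := by
  simpa [b.repr_apply_apply] using lp.hasSum_norm (p := 2) (by norm_num) (b.repr x)

variable [CompleteSpace E] [CompleteSpace F]

theorem HilbertBasis.hasSum_norm_adjoint_apply_sq (e : HilbertBasis ι 𝕜 E)
    (f : HilbertBasis κ 𝕜 F) (A : E →L[𝕜] F) (hA : Summable fun i => ‖A (e i)‖ ^ 2) :
    HasSum (fun j => ‖(A†) (f j)‖ ^ 2) (∑' i, ‖A (e i)‖ ^ 2) := by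
  have hcol : ∀ j, ‖(A†) (f j)‖ ^ 2 = ∑' i, ‖⟪f j, A (e i)⟫_𝕜‖ ^ 2 := fun j => by
    simp_rw [← (e.hasSum_norm_inner_sq ((A†) (f j))).tsum_eq,
      ContinuousLinearMap.adjoint_inner_right, norm_inner_symm]
  simp_rw [hcol]
  exact hasSum_tsum_comm_of_nonneg (fun _ _ => by positivity)
    (fun i => f.hasSum_norm_inner_sq (A (e i))) hA.hasSum

theorem HilbertBasis.summable_inner_apply_apply (e : HilbertBasis ι 𝕜 E) (A : E →L[𝕜] E)
    (hA : Summable fun i => ‖A (e i)‖ ^ 2) : Summable fun i => ⟪e i, A (A (e i))⟫_𝕜 := by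
  refine .of_norm_bounded ((hA.add (e.hasSum_norm_adjoint_apply_sq e A hA).summable).div_const 2)
    fun i => ?_
  rw [← ContinuousLinearMap.adjoint_inner_left]
  nlinarith [norm_inner_le_norm (𝕜 := 𝕜) ((A†) (e i)) (A (e i)),
    two_mul_le_add_sq ‖A (e i)‖ ‖(A†) (e i)‖]

theorem norm_smul_add_smul_adjoint_apply_sq (α β : 𝕜) (A : E →L[𝕜] E) (x : E) :
    ‖(α • A + β • A†) x‖ ^ 2 =
      ‖α‖ ^ 2 * ‖A x‖ ^ 2 + ‖β‖ ^ 2 * ‖(A†) x‖ ^ 2 +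
        2 * RCLike.re (starRingEnd 𝕜 α * β * ⟪A (A x), x⟫_𝕜) := by
  rw [add_apply, smul_apply, smul_apply, norm_add_sq (𝕜 := 𝕜), inner_smul_left, inner_smul_right,
    ContinuousLinearMap.adjoint_inner_right, norm_smul, norm_smul, ← mul_assoc]
  ring

end HilbertSchmidt

open Complex

section WeightedPart

variable {E ι : Type*} [NormedAddCommGroup E] [InnerProductSpace ℂ E]

theorem norm_weightedPart_apply_sq [CompleteSpace E] (ν θ : ℝ) (A : E →L[ℂ] E) (x : E) :
    ‖weightedPart ν θ A x‖ ^ 2 =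
      ν ^ 2 * ‖A x‖ ^ 2 + (1 - ν) ^ 2 * ‖(A†) x‖ ^ 2 +
        2 * ν * (1 - ν) * (exp (2 * θ * I) * ⟪x, A (A x)⟫_ℂ).re := by
  have hcoeff : starRingEnd ℂ (ν * exp (θ * I)) * (((1 - ν : ℝ) : ℂ) * exp (-(θ * I))) *
      ⟪A (A x), x⟫_ℂ =
        starRingEnd ℂ (((ν * (1 - ν) : ℝ) : ℂ) * (exp (2 * θ * I) * ⟪x, A (A x)⟫_ℂ)) := by
    simp only [map_mul, map_ofNat, conj_ofReal, ← exp_conj, conj_I, inner_conj_symm]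
    rw [show 2 * (θ : ℂ) * -I = θ * -I + -(θ * I) by ring, exp_add]
    push_cast
    ring
  have hnorm : ‖exp (-(θ * I))‖ = 1 := by
    rw [show -((θ : ℂ) * I) = ((-θ : ℝ) : ℂ) * I by push_cast; ring, norm_exp_ofReal_mul_I]
  rw [weightedPart, norm_smul_add_smul_adjoint_apply_sq, hcoeff, RCLike.re_to_complex, conj_re,
    re_ofReal_mul, norm_mul, norm_mul, norm_real, norm_real, norm_exp_ofReal_mul_I, hnorm]
  simp only [Real.norm_eq_abs, mul_one, sq_abs]
  ring

theorem hsNorm_sq (e : HilbertBasis ι ℂ E) (A : E →L[ℂ] E) :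
    hsNorm e A ^ 2 = ∑' i, ‖A (e i)‖ ^ 2 :=
  Real.sq_sqrt (tsum_nonneg fun _ => by positivity)

theorem hsNorm_weightedPart_sq [CompleteSpace E] (e : HilbertBasis ι ℂ E) (A : E →L[ℂ] E)
    (hA : Summable fun i => ‖A (e i)‖ ^ 2) (ν θ : ℝ) :
    hsNorm e (weightedPart ν θ A) ^ 2 =
      (ν ^ 2 + (1 - ν) ^ 2) * hsNorm e A ^ 2 +
        2 * ν * (1 - ν) * (exp (2 * θ * I) * trBasis e (A.comp A)).re := by
  have htr : HasSum (fun i => ⟪e i, A (A (e i))⟫_ℂ) (trBasis e (A.comp A)) :=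
    (e.summable_inner_apply_apply A hA).hasSum
  have hsum := ((hA.hasSum.mul_left (ν ^ 2)).add
    ((e.hasSum_norm_adjoint_apply_sq e A hA).mul_left ((1 - ν) ^ 2))).add
    ((hasSum_re (htr.mul_left (exp (2 * θ * I)))).mul_left (2 * ν * (1 - ν)))
  simp_rw [← norm_weightedPart_apply_sq] at hsum
  rw [hsNorm_sq, hsNorm_sq, hsum.tsum_eq]
  ring

end WeightedPart

theorem iSup_sqrt_add_mul_re_exp_mul (a : ℝ) {b : ℝ} (hb : 0 ≤ b) (z : ℂ) :
    ⨆ θ : ℝ, √(a + b * (exp (2 * θ * I) * z).re) = √(a + b * ‖z‖) := by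
  have hle : ∀ θ : ℝ, √(a + b * (exp (2 * θ * I) * z).re) ≤ √(a + b * ‖z‖) := fun θ => by
    have : ‖exp (2 * θ * I)‖ = 1 := by
      rw [show 2 * (θ : ℂ) * I = ((2 * θ : ℝ) : ℂ) * I by push_cast; ring, norm_exp_ofReal_mul_I]
    gcongr
    exact (re_le_norm _).trans (by rw [norm_mul, this, one_mul])
  have hmax : exp (2 * ((-arg z / 2 : ℝ) : ℂ) * I) * z = ‖z‖ := by
    nth_rw 2 [← norm_mul_exp_arg_mul_I z]
    rw [mul_left_comm, ← exp_add, show 2 * ((-arg z / 2 : ℝ) : ℂ) * I + arg z * I = 0 by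
      push_cast; ring, exp_zero, mul_one]
  refine le_antisymm (ciSup_le hle) (le_ciSup_of_le ⟨_, Set.forall_mem_range.2 hle⟩ (-arg z / 2) ?_)
  rw [hmax, ofReal_re]

theorem stmt10 {ι : Type*} (e : HilbertBasis ι ℂ H) (A : H →L[ℂ] H)
    (hA : Summable fun i => ‖A (e i)‖ ^ 2)
    (ν : ℝ) (hν₀ : 0 ≤ ν) (hν₁ : ν ≤ 1) :
    (wHS e ν A) ^ 2 =
      (2 * ν ^ 2 - 2 * ν + 1) * (hsNorm e A) ^ 2 +
        2 * ν * (1 - ν) * ‖trBasis e (A.comp A)‖ := by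
  have hcross : 0 ≤ 2 * ν * (1 - ν) := by nlinarith
  have hθ : ∀ θ : ℝ, hsNorm e (weightedPart ν θ A) =
      √((ν ^ 2 + (1 - ν) ^ 2) * hsNorm e A ^ 2 +
        2 * ν * (1 - ν) * (exp (2 * θ * I) * trBasis e (A.comp A)).re) := fun θ => by
    rw [← hsNorm_weightedPart_sq e A hA]
    exact (Real.sqrt_sq (Real.sqrt_nonneg _)).symm
  rw [wHS, funext hθ, iSup_sqrt_add_mul_re_exp_mul _ hcross,
    Real.sq_sqrt (add_nonneg (by positivity) (mul_nonneg hcross (norm_nonneg _)))]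
  ring
end

section
/- Let H be a complex Hilbert space, let A be a Hilbert–Schmidt operator on H, and let 0 ≤ ν ≤ 1. Then √(2ν² - 2ν + 1) ‖A‖₂ ≤ w_{(2,ν)}(A) ≤ ‖A‖₂. -/
variable {H : Type*} [NormedAddCommGroup H] [InnerProductSpace ℂ H] [CompleteSpace H]

/-!
Send a Hilbert–Schmidt operator `A` to its columns `(A eᵢ)ᵢ ∈ ℓ²(ι, H)`; then `‖A‖₂` is an `ℓ²`
norm, and `‖A*‖₂ = ‖A‖₂` by Parseval's identity and swapping a double sum of nonnegative terms
(done in `ℝ≥0∞`, where no summability is needed). With `u, v` the columns of `νA` and `(1-ν)A*`,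
the weighted part at angle `θ` has columns `e^{iθ} u + e^{-iθ} v`, so the upper bound is the
triangle inequality. At `θ = 0` and `θ = π/2` the columns are `u + v` and `i (u - v)`, and by the
parallelogram law these cannot both have norm below `√(‖u‖² + ‖v‖²) = √(ν² + (1-ν)²) ‖A‖₂`.
-/

open scoped ENNReal InnerProductSpace

section Lp

variable {ι : Type*} {G : ι → Type*} [∀ i, NormedAddCommGroup (G i)]

theorem memℓp_two_iff_summable_norm_sq (f : ∀ i, G i) :
    Memℓp f 2 ↔ Summable fun i => ‖f i‖ ^ 2 := by
  rw [memℓp_gen_iff (by norm_num)]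
  norm_num

theorem lp.norm_two_eq_sqrt_tsum (f : lp G 2) : ‖f‖ = √(∑' i, ‖f i‖ ^ 2) := by
  rw [lp.norm_eq_tsum_rpow (by norm_num) f, Real.sqrt_eq_rpow]
  norm_num

end Lp

section SumOfSquares

variable {E : Type*} [NormedAddCommGroup E] {ι : Type*}

theorem tsum_norm_sq_eq_toReal_tsum_enorm_sq (v : ι → E) :
    ∑' i, ‖v i‖ ^ 2 = (∑' i, ‖v i‖ₑ ^ 2).toReal := by
  rw [ENNReal.tsum_toReal_eq fun i => by finiteness]
  simp

theorem ofReal_tsum_norm_sq {v : ι → E} (hv : Summable fun i => ‖v i‖ ^ 2) :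
    ENNReal.ofReal (∑' i, ‖v i‖ ^ 2) = ∑' i, ‖v i‖ₑ ^ 2 := by
  simp [ENNReal.ofReal_tsum_of_nonneg (fun i => sq_nonneg ‖v i‖) hv, ENNReal.ofReal_pow]

theorem summable_norm_sq_iff_tsum_enorm_sq_ne_top (v : ι → E) :
    Summable (fun i => ‖v i‖ ^ 2) ↔ ∑' i, ‖v i‖ₑ ^ 2 ≠ ∞ :=
  ⟨fun h => ofReal_tsum_norm_sq h ▸ ENNReal.ofReal_ne_top,
    fun h => by simpa using ENNReal.summable_toReal h⟩

end SumOfSquares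

theorem norm_sq_add_norm_sq_le_of_norm_add_le_of_norm_sub_le (𝕜 : Type*) {E : Type*} [RCLike 𝕜]
    [NormedAddCommGroup E] [InnerProductSpace 𝕜 E] {x y : E} {r : ℝ}
    (h₁ : ‖x + y‖ ≤ r) (h₂ : ‖x - y‖ ≤ r) : ‖x‖ ^ 2 + ‖y‖ ^ 2 ≤ r ^ 2 := by
  have := parallelogram_law_with_norm 𝕜 x y
  nlinarith [norm_nonneg (x + y), norm_nonneg (x - y)]

section InnerProduct

variable {𝕜 : Type*} [RCLike 𝕜] {E F : Type*} [NormedAddCommGroup E] [InnerProductSpace 𝕜 E]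
  [NormedAddCommGroup F] [InnerProductSpace 𝕜 F] {ι κ : Type*}

namespace HilbertBasis

theorem hasSum_norm_inner_sq_s11 (b : HilbertBasis ι 𝕜 E) (x : E) :
    HasSum (fun i => ‖⟪b i, x⟫_𝕜‖ ^ 2) (‖x‖ ^ 2) := by
  have := RCLike.hasSum_re 𝕜 (b.hasSum_inner_mul_inner x x)
  rw [inner_self_eq_norm_sq] at this
  convert this using 2 with i
  rw [← inner_conj_symm x (b i), RCLike.conj_mul]
  norm_cast

theorem tsum_enorm_inner_sq (b : HilbertBasis ι 𝕜 E) (x : E) :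
    ∑' i, ‖⟪b i, x⟫_𝕜‖ₑ ^ 2 = ‖x‖ₑ ^ 2 := by
  rw [← ofReal_tsum_norm_sq (b.hasSum_norm_inner_sq_s11 x).summable,
    (b.hasSum_norm_inner_sq_s11 x).tsum_eq, ENNReal.ofReal_pow (norm_nonneg x), ofReal_norm]

theorem tsum_enorm_adjoint_sq [CompleteSpace E] [CompleteSpace F] (b : HilbertBasis ι 𝕜 E)
    (c : HilbertBasis κ 𝕜 F) (A : E →L[𝕜] F) :
    ∑' j, ‖A.adjoint (c j)‖ₑ ^ 2 = ∑' i, ‖A (b i)‖ₑ ^ 2 := calc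
  _ = ∑' j, ∑' i, ‖⟪b i, A.adjoint (c j)⟫_𝕜‖ₑ ^ 2 := by simp only [b.tsum_enorm_inner_sq]
  _ = ∑' i, ∑' j, ‖⟪c j, A (b i)⟫_𝕜‖ₑ ^ 2 := by
    rw [ENNReal.tsum_comm]
    simp only [ContinuousLinearMap.adjoint_inner_right, ← inner_conj_symm (A _), RCLike.enorm_conj]
  _ = _ := by simp only [c.tsum_enorm_inner_sq]

end HilbertBasis

end InnerProduct

section HilbertSchmidt

variable {E : Type*} [NormedAddCommGroup E] [InnerProductSpace ℂ E] {ι : Type*}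
  (e : HilbertBasis ι ℂ E)

theorem hsNorm_nonneg (A : E →L[ℂ] E) : 0 ≤ hsNorm e A :=
  Real.sqrt_nonneg _

theorem hsNorm_eq_norm_lp {A : E →L[ℂ] E} {f : lp (fun _ : ι => E) 2}
    (hf : ∀ i, f i = A (e i)) : hsNorm e A = ‖f‖ := by
  simp only [hsNorm, lp.norm_two_eq_sqrt_tsum, hf]

noncomputable def hsColumns (A : E →L[ℂ] E) (hA : Summable fun i => ‖A (e i)‖ ^ 2) :
    lp (fun _ : ι => E) 2 :=
  ⟨fun i => A (e i), (memℓp_two_iff_summable_norm_sq _).2 hA⟩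

variable {e}

theorem norm_hsColumns {A : E →L[ℂ] E} (hA : Summable fun i => ‖A (e i)‖ ^ 2) :
    ‖hsColumns e A hA‖ = hsNorm e A :=
  (hsNorm_eq_norm_lp e fun _ => rfl).symm

theorem hsNorm_smul_add_smul {A B : E →L[ℂ] E} (hA : Summable fun i => ‖A (e i)‖ ^ 2)
    (hB : Summable fun i => ‖B (e i)‖ ^ 2) (a b : ℂ) :
    hsNorm e (a • A + b • B) = ‖a • hsColumns e A hA + b • hsColumns e B hB‖ :=
  hsNorm_eq_norm_lp e fun _ => rfl

variable [CompleteSpace E]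

theorem hsNorm_adjoint (A : E →L[ℂ] E) : hsNorm e A.adjoint = hsNorm e A := by
  simp only [hsNorm, tsum_norm_sq_eq_toReal_tsum_enorm_sq, e.tsum_enorm_adjoint_sq e]

theorem summable_norm_adjoint_apply_sq {A : E →L[ℂ] E} (hA : Summable fun i => ‖A (e i)‖ ^ 2) :
    Summable fun i => ‖A.adjoint (e i)‖ ^ 2 := by
  rw [summable_norm_sq_iff_tsum_enorm_sq_ne_top, e.tsum_enorm_adjoint_sq e,
    ← summable_norm_sq_iff_tsum_enorm_sq_ne_top]
  exact hA

end HilbertSchmidt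

section WeightedPart

open Complex

variable {E : Type*} [NormedAddCommGroup E] [InnerProductSpace ℂ E] [CompleteSpace E] {ι : Type*}
  {e : HilbertBasis ι ℂ E} {A : E →L[ℂ] E} {ν : ℝ}

theorem hsNorm_weightedPart_le (hA : Summable fun i => ‖A (e i)‖ ^ 2) (hν₀ : 0 ≤ ν) (hν₁ : ν ≤ 1)
    (θ : ℝ) : hsNorm e (weightedPart ν θ A) ≤ hsNorm e A := by
  have hA' := summable_norm_adjoint_apply_sq hA
  have hexp_neg : ‖exp (-(θ * I))‖ = 1 := by rw [← neg_mul, ← ofReal_neg, norm_exp_ofReal_mul_I]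
  calc hsNorm e (weightedPart ν θ A)
      ≤ ‖(ν : ℂ) * exp (θ * I)‖ * hsNorm e A
        + ‖((1 - ν : ℝ) : ℂ) * exp (-(θ * I))‖ * hsNorm e A.adjoint := by
        rw [weightedPart, hsNorm_smul_add_smul hA hA', ← norm_hsColumns hA, ← norm_hsColumns hA',
          ← norm_smul, ← norm_smul]
        exact norm_add_le _ _
    _ = hsNorm e A := by
        rw [hsNorm_adjoint, norm_mul, norm_mul, norm_exp_ofReal_mul_I, hexp_neg, norm_real,
          norm_real, Real.norm_of_nonneg hν₀, Real.norm_of_nonneg (sub_nonneg.2 hν₁)]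
        ring

theorem hsNorm_weightedPart_zero (hA : Summable fun i => ‖A (e i)‖ ^ 2) :
    hsNorm e (weightedPart ν 0 A) = ‖(ν : ℂ) • hsColumns e A hA
      + ((1 - ν : ℝ) : ℂ) • hsColumns e A.adjoint (summable_norm_adjoint_apply_sq hA)‖ := by
  rw [weightedPart, hsNorm_smul_add_smul hA (summable_norm_adjoint_apply_sq hA)]
  simp

theorem hsNorm_weightedPart_pi_div_two (hA : Summable fun i => ‖A (e i)‖ ^ 2) :
    hsNorm e (weightedPart ν (Real.pi / 2) A) = ‖(ν : ℂ) • hsColumns e A hA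
      - ((1 - ν : ℝ) : ℂ) • hsColumns e A.adjoint (summable_norm_adjoint_apply_sq hA)‖ := by
  have hI : exp (↑(Real.pi / 2) * I) = I := by
    rw [ofReal_div, ofReal_ofNat, exp_pi_div_two_mul_I]
  rw [weightedPart, hsNorm_smul_add_smul hA (summable_norm_adjoint_apply_sq hA), exp_neg, hI,
    inv_I]
  generalize hsColumns e A hA = u
  generalize hsColumns e A.adjoint _ = v
  rw [show (ν * I) • u + ((1 - ν : ℝ) * -I) • v = I • ((ν : ℂ) • u - ((1 - ν : ℝ) : ℂ) • v) by
    module, norm_smul, norm_I, one_mul]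

end WeightedPart

theorem stmt11 {ι : Type*} (e : HilbertBasis ι ℂ H) (A : H →L[ℂ] H)
    (hA : Summable fun i => ‖A (e i)‖ ^ 2)
    (ν : ℝ) (hν₀ : 0 ≤ ν) (hν₁ : ν ≤ 1) :
    Real.sqrt (2 * ν ^ 2 - 2 * ν + 1) * hsNorm e A ≤ wHS e ν A ∧
      wHS e ν A ≤ hsNorm e A := by
  have hle := hsNorm_weightedPart_le hA hν₀ hν₁
  have hbdd : BddAbove (Set.range fun θ => hsNorm e (weightedPart ν θ A)) :=
    ⟨_, Set.forall_mem_range.2 hle⟩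
  refine ⟨?_, ciSup_le hle⟩
  have hw : 0 ≤ wHS e ν A := (hsNorm_nonneg e _).trans (le_ciSup hbdd 0)
  have key : _ ≤ wHS e ν A ^ 2 := norm_sq_add_norm_sq_le_of_norm_add_le_of_norm_sub_le ℂ
    ((hsNorm_weightedPart_zero hA).symm.trans_le (le_ciSup hbdd 0))
    ((hsNorm_weightedPart_pi_div_two hA).symm.trans_le (le_ciSup hbdd _))
  rw [norm_smul, norm_smul, norm_hsColumns, norm_hsColumns, hsNorm_adjoint, Complex.norm_real,
    Complex.norm_real, Real.norm_of_nonneg hν₀, Real.norm_of_nonneg (sub_nonneg.2 hν₁)] at key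
  rw [← pow_le_pow_iff_left₀ (mul_nonneg (Real.sqrt_nonneg _) (hsNorm_nonneg e A)) hw
    two_ne_zero, mul_pow, Real.sq_sqrt (by nlinarith)]
  linarith
end
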